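/- arXiv:2404.04246 — 3 statements merged into one kernel-verified Lean document; each statement's English description precedes it below -/
import Mathlib

section
/- Let (W,S) be a Coxeter system, J ⊆ S, and u, v ∈ W^J with u ≤ v. Define A^J_{u,v} = {a ∈ W^J : u ⋖ a ≤ v} (atoms of [u,v] lying in W^J). Then uW_J ∩ [e,v] = {y ∈ [u,v] : for all a ∈ A^J_{u,v}, ¬(a ≤ y)}. -/
/-!
Both inclusions rest on one property of minimal coset representatives: if `a, u ∈ Wᴶ`,
`y ∈ u W_J` and `a ≤ y`, then `a ≤ u`. Indeed, one walks down from `y` to `u` by right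
descents `s ∈ J`, and each step keeps `a` below by the lifting property, because `a s > a`
for `a ∈ Wᴶ`. Hence no atom of `[u, v]` in `Wᴶ` lies below an element of `u W_J`. Conversely,
for `y ∈ [u, v]` let `z` be the minimal representative of `y W_J`; then `u ≤ z ≤ y`, and if
`u < z` the chain property of `Wᴶ` (induction on `ℓ z` through a left descent of `z`, using
Deodhar's lemma) produces an atom `a ∈ Wᴶ` of `[u, z]`, which lies below `y`.

The subword and lifting properties of Bruhat order rest on the strong exchange property. It
comes from the action `signRep` of `W` on `W × ℤˣ`, `w • (t, ε) = (w t w⁻¹, ε * reflSign w t)`: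
`reflSign (π ω) t` is `-1` to the number of occurrences of `t` in `ris ω`, for every word `ω`,
and it is `-1` when `t` is a right inversion of `w`.
-/

open Polynomial

namespace KL

variable {B W : Type*} [Group W] {M : CoxeterMatrix B}

/-- Bruhat order on a Coxeter group: reflexive-transitive closure of right
multiplication by a reflection that increases length. -/
def BruhatLE (cs : CoxeterSystem M W) : W → W → Prop :=
  Relation.ReflTransGen (fun x y =>
    ∃ t, cs.IsReflection t ∧ y = x * t ∧ cs.length x < cs.length y)

def BruhatLT (cs : CoxeterSystem M W) (x y : W) : Prop :=
  BruhatLE cs x y ∧ x ≠ y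

/-- Covering relation of Bruhat order. -/
def BruhatCovBy (cs : CoxeterSystem M W) (x y : W) : Prop :=
  BruhatLT cs x y ∧ ∀ z, BruhatLT cs x z → BruhatLT cs z y → False

/-- The Bruhat interval `[u, v]`. -/
def BruhatInterval (cs : CoxeterSystem M W) (u v : W) : Set W :=
  {y | BruhatLE cs u y ∧ BruhatLE cs y v}

/-- The standard parabolic subgroup `W_J`. -/
def ParabolicSubgroup (cs : CoxeterSystem M W) (J : Set B) : Subgroup W :=
  Subgroup.closure (cs.simple '' J)

/-- `w` is the minimal-length representative of its coset `w * W_J`,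
i.e. `w ∈ Wᴶ`. -/
def IsMinRep (cs : CoxeterSystem M W) (J : Set B) (w : W) : Prop :=
  ∀ x ∈ ParabolicSubgroup cs J, cs.length w ≤ cs.length (w * x)

/-- The set `Aᴶ_{u,v}` of atoms of `[u,v]` lying in `Wᴶ`. -/
def AtomSet (cs : CoxeterSystem M W) (J : Set B) (u v : W) : Set W :=
  {a | IsMinRep cs J a ∧ BruhatCovBy cs u a ∧ BruhatLE cs a v}

/-- The parabolic quotient interval `[u,v]ᴶ = [u,v] ∩ Wᴶ`. -/
def QuotInterval (cs : CoxeterSystem M W) (J : Set B) (u v : W) : Set W :=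
  {y | IsMinRep cs J y ∧ BruhatLE cs u y ∧ BruhatLE cs y v}

/-- The family of ordinary Kazhdan–Lusztig `R`-polynomials, characterized by
its defining recursion. -/
def IsRFamily (cs : CoxeterSystem M W) (R : W → W → Polynomial ℤ) : Prop :=
  (∀ u v, ¬ BruhatLE cs u v → R u v = 0) ∧
  (∀ u, R u u = 1) ∧
  (∀ (i : B) (u v : W), cs.length (cs.simple i * v) < cs.length v →
    (cs.length (cs.simple i * u) < cs.length u →
      R u v = R (cs.simple i * u) (cs.simple i * v)) ∧
    (cs.length u < cs.length (cs.simple i * u) →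
      R u v = (X - 1) * R u (cs.simple i * v)
            + X * R (cs.simple i * u) (cs.simple i * v)))

/-- The family of ordinary Kazhdan–Lusztig polynomials `P_{u,v}`, characterized
by its defining properties, relative to a family `R` of `R`-polynomials. -/
def IsPFamily (cs : CoxeterSystem M W) (R P : W → W → Polynomial ℤ) : Prop :=
  (∀ u v, ¬ BruhatLE cs u v → P u v = 0) ∧
  (∀ u, P u u = 1) ∧
  (∀ u v, BruhatLT cs u v →
    2 * (P u v).natDegree + 1 ≤ cs.length v - cs.length u) ∧
  (∀ u v, BruhatLE cs u v →
    (P u v).reflect (cs.length v - cs.length u) =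
      ∑ᶠ σ ∈ BruhatInterval cs u v, R u σ * P σ v)

/-- The family of parabolic `R`-polynomials `R^{J,x}_{u,v}` of Deodhar,
characterized by its defining recursion. -/
def IsParaRFamily (cs : CoxeterSystem M W) (J : Set B) (x : Polynomial ℤ)
    (R : W → W → Polynomial ℤ) : Prop :=
  (∀ u v, IsMinRep cs J u → IsMinRep cs J v → ¬ BruhatLE cs u v → R u v = 0) ∧
  (∀ u, IsMinRep cs J u → R u u = 1) ∧
  (∀ (i : B) (u v : W), IsMinRep cs J u → IsMinRep cs J v →
    cs.length (cs.simple i * v) < cs.length v →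
    (cs.length (cs.simple i * u) < cs.length u →
      R u v = R (cs.simple i * u) (cs.simple i * v)) ∧
    (cs.length u < cs.length (cs.simple i * u) →
      IsMinRep cs J (cs.simple i * u) →
      R u v = (X - 1) * R u (cs.simple i * v)
            + X * R (cs.simple i * u) (cs.simple i * v)) ∧
    (cs.length u < cs.length (cs.simple i * u) →
      ¬ IsMinRep cs J (cs.simple i * u) →
      R u v = (X - 1 - x) * R u (cs.simple i * v)))

/-- The family of parabolic Kazhdan–Lusztig polynomials `P^{J,x}_{u,v}` of
Deodhar, characterized by its defining properties, relative to a family `R`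
of parabolic `R`-polynomials. -/
def IsParaPFamily (cs : CoxeterSystem M W) (J : Set B)
    (R P : W → W → Polynomial ℤ) : Prop :=
  (∀ u v, IsMinRep cs J u → IsMinRep cs J v → ¬ BruhatLE cs u v → P u v = 0) ∧
  (∀ u, IsMinRep cs J u → P u u = 1) ∧
  (∀ u v, IsMinRep cs J u → IsMinRep cs J v → BruhatLT cs u v →
    2 * (P u v).natDegree + 1 ≤ cs.length v - cs.length u) ∧
  (∀ u v, IsMinRep cs J u → IsMinRep cs J v → BruhatLE cs u v →
    (P u v).reflect (cs.length v - cs.length u) =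
      ∑ᶠ σ ∈ QuotInterval cs J u v, R u σ * P σ v)

open CoxeterSystem List

variable (cs : CoxeterSystem M W)

local prefix:100 "s" => cs.simple
local prefix:100 "π" => cs.wordProd
local prefix:100 "ℓ" => cs.length

section StrongExchange

theorem conj_eq_mul_pow_iff {G : Type*} [Group G] {p b : G} (h : p⁻¹ * b = b * p) (t : G)
    (k : ℕ) : p * t * p⁻¹ = b * p ^ k ↔ t = b * p ^ (k + 2) := by
  rw [show b * p ^ (k + 2) = p⁻¹ * (b * p ^ k) * p by rw [← mul_assoc, h, pow_add, sq]; group]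
  exact ⟨fun h => by rw [← h]; group, fun h => by rw [h]; group⟩

open Classical in
noncomputable def signAction (i : B) : Function.End (W × ℤˣ) :=
  fun p => (s i * p.1 * s i, p.2 * if p.1 = s i then -1 else 1)

open Classical in
/-- The reflections `s i' * (s i * s i') ^ k`, `k < 2 * m`, are the right inversion sequence of
the alternating word `i i' ⋯ i i'` of length `2 * m`. -/
theorem signAction_mul_pow_apply (i i' : B) (m : ℕ) (t : W) (ε : ℤˣ) :
    ((signAction cs i * signAction cs i') ^ m) (t, ε) =
      ((s i * s i') ^ m * t * ((s i * s i') ^ m)⁻¹,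
        ε * ∏ k ∈ Finset.range (2 * m), if t = s i' * (s i * s i') ^ k then -1 else 1) := by
  have hconj := conj_eq_mul_pow_iff (p := s i * s i') (b := s i') (by simp [mul_assoc])
  induction m generalizing t ε with
  | zero =>
    simp only [pow_zero, one_mul, inv_one, mul_one, Nat.mul_zero, Finset.prod_range_zero]
    rfl
  | succ m ih =>
    rw [pow_succ]
    change ((signAction cs i * signAction cs i') ^ m)
      (signAction cs i (signAction cs i' (t, ε))) = _
    simp only [signAction]
    rw [ih]
    have e1 : s i * (s i' * t * s i') * s i = s i * s i' * t * (s i * s i')⁻¹ := by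
      simp [mul_assoc]
    have e2 : (s i' * t * s i' = s i) ↔ t = s i' * (s i * s i') ^ 1 := by
      rw [pow_one]
      exact ⟨fun h => by rw [← h]; simp [mul_assoc], fun h => by rw [h]; simp [mul_assoc]⟩
    ext
    · simp only [e1, pow_succ]; group
    · simp only [e1, hconj, e2, Nat.mul_succ, Finset.prod_range_succ', pow_zero, mul_one]
      ac_rfl

theorem signAction_mul_pow_eq_one {i i' : B} {m : ℕ} (hm : (s i * s i') ^ m = 1) :
    (signAction cs i * signAction cs i') ^ m = 1 := by
  have hperiod : ∀ k, (s i * s i') ^ (m + k) = (s i * s i') ^ k := by simp [pow_add, hm]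
  refine funext fun ⟨t, ε⟩ => ?_
  change _ = (t, ε)
  rw [signAction_mul_pow_apply, two_mul, Finset.prod_range_add]
  simp only [hm, one_mul, inv_one, mul_one]
  conv => enter [1, 2, 2, 2, 2, k]; rw [hperiod]
  rw [← sq, Int.units_sq, mul_one]

theorem isLiftable_signAction : M.IsLiftable (signAction cs) :=
  fun i i' => signAction_mul_pow_eq_one cs (cs.simple_mul_simple_pow i i')

noncomputable def signRep : W →* Function.End (W × ℤˣ) :=
  cs.lift ⟨signAction cs, isLiftable_signAction cs⟩

noncomputable def reflSign (w t : W) : ℤˣ := (signRep cs w (t, 1)).2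

theorem signRep_simple (i : B) : signRep cs (s i) = signAction cs i :=
  cs.lift_apply_simple (isLiftable_signAction cs) i

theorem signRep_mul_apply (a b : W) (x : W × ℤˣ) :
    signRep cs (a * b) x = signRep cs a (signRep cs b x) := by
  rw [map_mul]
  rfl

theorem signRep_apply (w t : W) (ε : ℤˣ) :
    signRep cs w (t, ε) = (w * t * w⁻¹, ε * reflSign cs w t) := by
  induction w using cs.simple_induction_left generalizing t ε with
  | one =>
    simp only [map_one, one_mul, inv_one, mul_one, reflSign]
    change (t, ε) = (t, ε * 1)
    rw [mul_one]
  | mul_simple_left w i ih =>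
    have key : ∀ ε', signRep cs (s i * w) (t, ε') =
        signAction cs i (w * t * w⁻¹, ε' * reflSign cs w t) := by
      intro ε'
      rw [signRep_mul_apply, signRep_simple, ih]
    rw [reflSign, key, key]
    simp only [signAction, one_mul, mul_inv_rev, inv_simple, mul_assoc]

theorem reflSign_mul (a b t : W) :
    reflSign cs (a * b) t = reflSign cs b t * reflSign cs a (b * t * b⁻¹) := by
  have h := signRep_apply cs (a * b) t 1
  rw [signRep_mul_apply, signRep_apply, signRep_apply] at h
  simpa using (congrArg Prod.snd h).symm

open Classical in
theorem reflSign_simple (i : B) (t : W) :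
    reflSign cs (s i) t = if t = s i then -1 else 1 := by
  simp [reflSign, signRep_simple, signAction]

theorem reflSign_one (t : W) : reflSign cs 1 t = 1 := by
  simpa using reflSign_mul cs 1 1 t

theorem reflSign_wordProd_of_not_mem {ω : List B} {t : W} (ht : t ∉ cs.rightInvSeq ω) :
    reflSign cs (π ω) t = 1 := by
  induction ω with
  | nil => exact reflSign_one cs t
  | cons i ω ih =>
    simp only [rightInvSeq, mem_cons, not_or] at ht
    have hne : π ω * t * (π ω)⁻¹ ≠ s i := fun h => ht.1 (by rw [← h]; group)
    rw [wordProd_cons, reflSign_mul, ih ht.2, reflSign_simple, if_neg hne, one_mul]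

theorem reflSign_self {t : W} (ht : cs.IsReflection t) : reflSign cs t t = -1 := by
  obtain ⟨w, i, rfl⟩ := ht
  have hconj : w⁻¹ * (w * s i * w⁻¹) * w⁻¹⁻¹ = s i := by group
  have hw := reflSign_mul cs w w⁻¹ (w * s i * w⁻¹)
  rw [mul_inv_cancel, reflSign_one, hconj] at hw
  rw [reflSign_mul, reflSign_mul, hconj, reflSign_simple, if_pos rfl, cs.simple_mul_simple_self,
    one_mul, inv_simple, mul_left_comm, ← hw, mul_one]

theorem reflSign_of_isRightInversion {w t : W} (ht : cs.IsRightInversion w t) :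
    reflSign cs w t = -1 := by
  refine (Int.units_eq_one_or _).resolve_left fun h1 => ?_
  obtain ⟨ω, hω, hπ⟩ := cs.exists_isReduced (w * t)
  have hsign : reflSign cs (π ω) t ≠ 1 := by
    rw [← hπ, reflSign_mul, reflSign_self cs ht.1, ht.1.mul_self, one_mul, ht.1.inv, h1]
    decide
  have := (cs.isRightInversion_of_mem_rightInvSeq hω
    (by_contra fun h => hsign (reflSign_wordProd_of_not_mem cs h))).2
  rw [← hπ, mul_assoc, ht.1.mul_self, mul_one] at this
  exact absurd ht.2 (by omega)

/-- The strong exchange property. -/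
theorem mem_rightInvSeq_of_isRightInversion {ω : List B} {t : W}
    (ht : cs.IsRightInversion (π ω) t) : t ∈ cs.rightInvSeq ω := by
  by_contra h
  have := reflSign_of_isRightInversion cs ht
  rw [reflSign_wordProd_of_not_mem cs h] at this
  exact absurd this (by decide)

theorem exists_eraseIdx_of_isRightInversion {ω : List B} {t : W}
    (ht : cs.IsRightInversion (π ω) t) : ∃ j < ω.length, π ω * t = π (ω.eraseIdx j) := by
  obtain ⟨j, hj, rfl⟩ := List.mem_iff_getElem.mp (mem_rightInvSeq_of_isRightInversion cs ht)
  rw [length_rightInvSeq] at hj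
  exact ⟨j, hj, by rw [← List.getD_eq_getElem _ 1, wordProd_mul_getD_rightInvSeq]⟩

end StrongExchange

section ReducedWords

theorem length_wordProd_eraseIdx_lt {ω : List B} {j : ℕ} (hj : j < ω.length) :
    ℓ (π (ω.eraseIdx j)) < ω.length :=
  (cs.length_wordProd_le _).trans_lt (by rw [← List.length_eraseIdx_add_one hj]; omega)

theorem isReduced_append {α β : List B} (hα : cs.IsReduced α) (hβ : cs.IsReduced β)
    (h : ℓ (π α * π β) = ℓ (π α) + ℓ (π β)) : cs.IsReduced (α ++ β) := by
  rw [CoxeterSystem.IsReduced, wordProd_append, h, hα, hβ, List.length_append]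

theorem isReduced_append_singleton {α : List B} {i : B} (hα : cs.IsReduced α)
    (h : ℓ (π α) < ℓ (π α * s i)) : cs.IsReduced (α ++ [i]) := by
  refine isReduced_append cs hα (by simp [CoxeterSystem.IsReduced, length_simple]) ?_
  rw [wordProd_singleton, length_simple]
  rcases cs.length_mul_simple (π α) i with h' | h' <;> omega

theorem isReduced_of_append_left {α β : List B} (h : cs.IsReduced (α ++ β)) :
    cs.IsReduced α := by
  simpa using h.take α.length

theorem exists_eraseIdx_append_of_isRightInversion {α β : List B} {t : W}
    (ht : cs.IsRightInversion (π (α ++ β)) t) :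
    (∃ j < α.length, π (α ++ β) * t = π (α.eraseIdx j ++ β)) ∨
      ∃ j < β.length, π (α ++ β) * t = π (α ++ β.eraseIdx j) := by
  obtain ⟨j, hj, heq⟩ := exists_eraseIdx_of_isRightInversion cs ht
  rcases lt_or_ge j α.length with hjα | hjα
  · exact .inl ⟨j, hjα, by rwa [List.eraseIdx_append_of_lt_length hjα] at heq⟩
  · rw [List.length_append] at hj
    exact .inr ⟨j - α.length, by omega, by rwa [List.eraseIdx_append_of_length_le hjα] at heq⟩

end ReducedWords

section Bruhat

variable {cs}

theorem bruhatLE_refl (x : W) : BruhatLE cs x x := Relation.ReflTransGen.refl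

theorem BruhatLE.trans {x y z : W} (h₁ : BruhatLE cs x y) (h₂ : BruhatLE cs y z) :
    BruhatLE cs x z :=
  Relation.ReflTransGen.trans h₁ h₂

theorem BruhatLE.eq_or_length_lt {x y : W} (h : BruhatLE cs x y) : x = y ∨ ℓ x < ℓ y := by
  induction h with
  | refl => exact .inl rfl
  | tail _ hstep ih =>
    obtain ⟨t, -, -, hlt⟩ := hstep
    rcases ih with rfl | h
    exacts [.inr hlt, .inr (h.trans hlt)]

theorem BruhatLE.length_le {x y : W} (h : BruhatLE cs x y) : ℓ x ≤ ℓ y := by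
  rcases h.eq_or_length_lt with rfl | h
  exacts [le_rfl, h.le]

theorem BruhatLE.eq_of_length_le {x y : W} (h : BruhatLE cs x y) (hl : ℓ y ≤ ℓ x) : x = y :=
  h.eq_or_length_lt.resolve_right (by omega)

theorem BruhatLT.length_lt {x y : W} (h : BruhatLT cs x y) : ℓ x < ℓ y :=
  h.1.eq_or_length_lt.resolve_left h.2

theorem bruhatCovBy_of_length_eq {x y : W} (h : BruhatLT cs x y) (hl : ℓ y = ℓ x + 1) :
    BruhatCovBy cs x y :=
  ⟨h, fun _ h₁ h₂ => by have := h₁.length_lt; have := h₂.length_lt; omega⟩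

theorem bruhatLE_mul_of_length_lt {x t : W} (ht : cs.IsReflection t) (h : ℓ x < ℓ (x * t)) :
    BruhatLE cs x (x * t) :=
  .single ⟨t, ht, rfl, h⟩

theorem bruhatLE_of_isRightInversion {x t : W} (ht : cs.IsRightInversion x t) :
    BruhatLE cs (x * t) x :=
  .single ⟨t, ht.1, by rw [mul_assoc, ht.1.mul_self, mul_one], ht.2⟩

theorem BruhatLE.inv {x y : W} (h : BruhatLE cs x y) : BruhatLE cs x⁻¹ y⁻¹ := by
  induction h with
  | refl => exact bruhatLE_refl _
  | @tail z _ _ hstep ih =>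
    obtain ⟨t, ht, rfl, hlt⟩ := hstep
    refine ih.tail ⟨z * t * z⁻¹, ht.conj z, by rw [mul_inv_rev, ht.inv]; group, ?_⟩
    rwa [cs.length_inv, cs.length_inv]

theorem mul_eq_mul_simple_of_length_lt {z t : W} {i : B} (ht : cs.IsReflection t)
    (hzt : ℓ z < ℓ (z * t)) (hzs : ℓ z < ℓ (z * s i))
    (h : ℓ (z * t * s i) < ℓ (z * s i)) : z * t = z * s i := by
  obtain ⟨κ, hκ, rfl⟩ := cs.exists_isReduced z
  have hκi : π (κ ++ [i]) = π κ * s i := by rw [wordProd_append, wordProd_singleton]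
  have hconj : π κ * t * s i = π (κ ++ [i]) * (s i * t * s i) := by
    rw [hκi]; simp [mul_assoc]
  have hinv : cs.IsRightInversion (π (κ ++ [i])) (s i * t * s i) := by
    refine ⟨by simpa using ht.conj (s i), ?_⟩
    rwa [← hconj, hκi]
  rcases exists_eraseIdx_append_of_isRightInversion cs hinv with ⟨j, hj, heq⟩ | ⟨j, hj, heq⟩
  · rw [← hconj, wordProd_append, wordProd_singleton, mul_left_inj] at heq
    have := length_wordProd_eraseIdx_lt cs hj
    rw [← heq, ← hκ] at this
    omega
  · obtain rfl : j = 0 := by simpa using hj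
    rw [← hconj] at heq
    simpa using congrArg (· * s i) heq

theorem BruhatLE.lift {x y : W} (hxy : BruhatLE cs x y) {i : B} (hx : ℓ x < ℓ (x * s i)) :
    (ℓ y < ℓ (y * s i) → BruhatLE cs (x * s i) (y * s i)) ∧
      (ℓ (y * s i) < ℓ y → BruhatLE cs (x * s i) y) := by
  induction hxy with
  | refl => exact ⟨fun _ => bruhatLE_refl _, fun h => absurd hx (by omega)⟩
  | @tail z _ _ hstep ih =>
    obtain ⟨t, ht, rfl, hzt⟩ := hstep
    have hsi := cs.isReflection_simple i
    have ht' : cs.IsReflection (s i * t * s i) := by simpa using ht.conj (s i)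
    have hconj : z * t * s i = z * s i * (s i * t * s i) := by simp [mul_assoc]
    have hup : ℓ (z * s i) < ℓ (z * t * s i) → BruhatLE cs (z * s i) (z * t * s i) := by
      rw [hconj]; exact bruhatLE_mul_of_length_lt ht'
    rcases cs.length_mul_simple z i with hz | hz <;>
      rcases cs.length_mul_simple (z * t) i with hy | hy
    -- The only delicate case: `z < z s` but `z t s < z t`; either `z s ≤ z t s` or the
    -- exchange property forces `z t = z s`.
    · exact ⟨fun _ => (ih.1 (by omega)).trans (hup (by omega)), fun _ => by omega⟩
    · refine ⟨fun _ => by omega, fun _ => ?_⟩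
      rcases lt_or_gt_of_ne (ht'.length_mul_left_ne (z * s i)) with h | h
      · rw [← hconj] at h
        rw [mul_eq_mul_simple_of_length_lt ht hzt (by omega) h]
        exact ih.1 (by omega)
      · rw [← hconj] at h
        exact (ih.1 (by omega)).trans <| (hup h).trans
          (bruhatLE_of_isRightInversion ⟨hsi, by omega⟩)
    · exact ⟨fun _ => ((ih.2 (by omega)).trans (bruhatLE_mul_of_length_lt ht hzt)).trans
        (bruhatLE_mul_of_length_lt hsi (by omega)), fun _ => by omega⟩
    · exact ⟨fun _ => by omega,
        fun _ => (ih.2 (by omega)).trans (bruhatLE_mul_of_length_lt ht hzt)⟩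

theorem BruhatLE.mul_simple_of_ascents {x y : W} {i : B} (hxy : BruhatLE cs x y)
    (hx : ℓ x < ℓ (x * s i)) (hy : ℓ y < ℓ (y * s i)) : BruhatLE cs (x * s i) (y * s i) :=
  (hxy.lift hx).1 hy

theorem BruhatLE.mul_simple_le {x y : W} {i : B} (hxy : BruhatLE cs x y)
    (hx : ℓ x < ℓ (x * s i)) (hy : ℓ (y * s i) < ℓ y) : BruhatLE cs (x * s i) y :=
  (hxy.lift hx).2 hy

variable (cs) in
/-- The deletion property. -/
theorem exists_isReduced_sublist (ω : List B) :
    ∃ ω', ω' <+ ω ∧ cs.IsReduced ω' ∧ π ω' = π ω := by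
  induction hn : ω.length using Nat.strong_induction_on generalizing ω with
  | _ n ih =>
  rcases List.eq_nil_or_concat ω with rfl | ⟨κ, i, rfl⟩
  · exact ⟨[], .refl _, by simp [CoxeterSystem.IsReduced], rfl⟩
  simp only [concat_eq_append, length_append, length_singleton] at hn ⊢
  obtain ⟨κ', hsub, hred, hπ⟩ := ih κ.length (by omega) κ rfl
  have hκ'i : π (κ ++ [i]) = π κ' * s i := by rw [wordProd_append, wordProd_singleton, hπ]
  rcases cs.length_mul_simple (π κ') i with h | h
  · exact ⟨κ' ++ [i], hsub.append_right _, isReduced_append_singleton cs hred (by omega),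
      by rw [hκ'i, wordProd_append, wordProd_singleton]⟩
  · have hdesc : ℓ (π κ' * s i) < ℓ (π κ') := by omega
    obtain ⟨j, hj, heq⟩ :=
      exists_eraseIdx_of_isRightInversion cs ⟨cs.isReflection_simple i, hdesc⟩
    obtain ⟨ω', hsub', hred', hπ'⟩ := ih (κ'.eraseIdx j).length
      (by have := List.length_eraseIdx_add_one hj; have := hsub.length_le; omega) _ rfl
    exact ⟨ω', hsub'.trans <| (κ'.eraseIdx_sublist j).trans <| hsub.trans <|
      sublist_append_left _ _, hred', by rw [hπ', hκ'i, heq]⟩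

theorem BruhatLE.exists_sublist {x : W} {ω : List B} (h : BruhatLE cs x (π ω))
    (hω : cs.IsReduced ω) : ∃ ω', ω' <+ ω ∧ cs.IsReduced ω' ∧ π ω' = x := by
  generalize hy : π ω = y at h
  induction h generalizing ω with
  | refl => exact ⟨ω, .refl _, hω, hy⟩
  | @tail z _ _ hstep ih =>
    obtain ⟨t, ht, rfl, hzt⟩ := hstep
    have hz : π ω * t = z := by rw [hy, mul_assoc, ht.mul_self, mul_one]
    obtain ⟨j, -, hj⟩ :=
      exists_eraseIdx_of_isRightInversion cs (ω := ω) ⟨ht, by rwa [hz, hy]⟩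
    obtain ⟨ω₁, hsub₁, hred₁, hπ₁⟩ := exists_isReduced_sublist cs (ω.eraseIdx j)
    obtain ⟨ω', hsub', hred', hπ'⟩ := ih hred₁ (by rw [hπ₁, ← hj, hz])
    exact ⟨ω', hsub'.trans (hsub₁.trans (ω.eraseIdx_sublist j)), hred', hπ'⟩

theorem bruhatLE_wordProd_of_sublist {ω ω' : List B} (hω : cs.IsReduced ω) (h : ω' <+ ω) :
    BruhatLE cs (π ω') (π ω) := by
  induction ω using List.reverseRecOn generalizing ω' with
  | nil => rw [List.sublist_nil.mp h]; exact bruhatLE_refl _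
  | append_singleton κ i ih =>
    have hκ : cs.IsReduced κ := isReduced_of_append_left cs hω
    have hasc : ℓ (π κ) < ℓ (π κ * s i) := by
      have := hω.eq
      rw [wordProd_append, wordProd_singleton, length_append, length_singleton, ← hκ.eq] at this
      omega
    have hstep := bruhatLE_mul_of_length_lt (cs.isReflection_simple i) hasc
    obtain ⟨ω₁, ω₂, rfl, h₁, h₂⟩ := List.sublist_append_iff.mp h
    rw [wordProd_append, wordProd_append, wordProd_singleton]
    rcases List.sublist_singleton.mp h₂ with rfl | rfl
    · simpa using (ih hκ h₁).trans hstep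
    · rw [wordProd_singleton]
      rcases cs.length_mul_simple (π ω₁) i with h | h
      · exact (ih hκ h₁).mul_simple_of_ascents (by omega) hasc
      · exact (bruhatLE_of_isRightInversion ⟨cs.isReflection_simple i, by omega⟩).trans
          ((ih hκ h₁).trans hstep)

theorem one_bruhatLE (w : W) : BruhatLE cs 1 w := by
  obtain ⟨ω, hω, rfl⟩ := cs.exists_isReduced w
  simpa using bruhatLE_wordProd_of_sublist hω (nil_sublist ω)

theorem BruhatLE.le_mul_simple {x y : W} {i : B} (hxy : BruhatLE cs x y)
    (hx : ℓ x < ℓ (x * s i)) (hy : ℓ (y * s i) < ℓ y) : BruhatLE cs x (y * s i) := by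
  obtain ⟨κ, hκ, hκπ⟩ := cs.exists_isReduced (y * s i)
  have hyκ : y = π (κ ++ [i]) := by
    rw [wordProd_append, wordProd_singleton, ← hκπ, simple_mul_simple_cancel_right]
  have hred : cs.IsReduced (κ ++ [i]) := by
    refine isReduced_append_singleton cs hκ ?_
    rwa [← hκπ, simple_mul_simple_cancel_right]
  rw [hyκ] at hxy
  obtain ⟨α, hsub, hα, rfl⟩ := hxy.exists_sublist hred
  obtain ⟨α₁, α₂, rfl, h₁, h₂⟩ := List.sublist_append_iff.mp hsub
  rcases List.sublist_singleton.mp h₂ with rfl | rfl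
  · rw [hκπ, append_nil]
    exact bruhatLE_wordProd_of_sublist hκ h₁
  · have := cs.length_wordProd_le α₁
    have hlen := hα.eq
    rw [wordProd_append, wordProd_singleton] at hx hlen
    rw [simple_mul_simple_cancel_right] at hx
    rw [length_append, length_singleton] at hlen
    omega

theorem bruhatLE_of_isLeftInversion {x t : W} (ht : cs.IsLeftInversion x t) :
    BruhatLE cs (t * x) x :=
  .single ⟨x⁻¹ * t * x, by simpa using ht.1.conj x⁻¹,
    by rw [show t * x * (x⁻¹ * t * x) = t * t * x by group, ht.1.mul_self, one_mul], ht.2⟩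

theorem length_inv_mul_simple (x : W) (i : B) : ℓ (x⁻¹ * s i) = ℓ (s i * x) := by
  rw [← cs.length_inv, mul_inv_rev, inv_inv, inv_simple]

theorem BruhatLE.simple_mul_of_ascents {x y : W} {i : B} (hxy : BruhatLE cs x y)
    (hx : ℓ x < ℓ (s i * x)) (hy : ℓ y < ℓ (s i * y)) :
    BruhatLE cs (s i * x) (s i * y) := by
  rw [← length_inv_mul_simple, ← cs.length_inv x] at hx
  rw [← length_inv_mul_simple, ← cs.length_inv y] at hy
  simpa using (hxy.inv.mul_simple_of_ascents hx hy).inv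

theorem BruhatLE.simple_mul_le {x y : W} {i : B} (hxy : BruhatLE cs x y)
    (hx : ℓ x < ℓ (s i * x)) (hy : ℓ (s i * y) < ℓ y) :
    BruhatLE cs (s i * x) y := by
  rw [← length_inv_mul_simple, ← cs.length_inv x] at hx
  rw [← length_inv_mul_simple, ← cs.length_inv y] at hy
  simpa using (hxy.inv.mul_simple_le hx hy).inv

theorem BruhatLE.le_simple_mul {x y : W} {i : B} (hxy : BruhatLE cs x y)
    (hx : ℓ x < ℓ (s i * x)) (hy : ℓ (s i * y) < ℓ y) :
    BruhatLE cs x (s i * y) := by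
  rw [← length_inv_mul_simple, ← cs.length_inv x] at hx
  rw [← length_inv_mul_simple, ← cs.length_inv y] at hy
  simpa using (hxy.inv.le_mul_simple hx hy).inv

end Bruhat

section Parabolic

variable {cs} {J : Set B}

variable (cs) in
theorem simple_mem_parabolicSubgroup {j : B} (hj : j ∈ J) : s j ∈ ParabolicSubgroup cs J :=
  Subgroup.subset_closure ⟨j, hj, rfl⟩

variable (cs) in
theorem wordProd_mem_parabolicSubgroup {ω : List B} (h : ∀ i ∈ ω, i ∈ J) :
    π ω ∈ ParabolicSubgroup cs J := by
  induction ω with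
  | nil => exact one_mem _
  | cons j ω ih =>
    rw [wordProd_cons]
    exact mul_mem (simple_mem_parabolicSubgroup cs (h j mem_cons_self))
      (ih fun i hi => h i (mem_cons_of_mem j hi))

theorem exists_isReduced_of_mem_parabolicSubgroup {w : W} (hw : w ∈ ParabolicSubgroup cs J) :
    ∃ ω : List B, (∀ i ∈ ω, i ∈ J) ∧ cs.IsReduced ω ∧ π ω = w := by
  obtain ⟨ω, hJ, rfl⟩ : ∃ ω : List B, (∀ i ∈ ω, i ∈ J) ∧ π ω = w := by
    induction hw using Subgroup.closure_induction with
    | mem x hx =>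
      obtain ⟨j, hj, rfl⟩ := hx
      exact ⟨[j], by simp [hj], cs.wordProd_singleton j⟩
    | one => exact ⟨[], by simp, cs.wordProd_nil⟩
    | mul x y _ _ ihx ihy =>
      obtain ⟨ω₁, h₁, rfl⟩ := ihx
      obtain ⟨ω₂, h₂, rfl⟩ := ihy
      exact ⟨ω₁ ++ ω₂, by simpa [or_imp, forall_and] using ⟨h₁, h₂⟩,
        cs.wordProd_append _ _⟩
    | inv x _ ihx =>
      obtain ⟨ω, h, rfl⟩ := ihx
      exact ⟨ω.reverse, by simpa using h, cs.wordProd_reverse ω⟩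
  obtain ⟨ω', hsub, hred, hπ⟩ := exists_isReduced_sublist cs ω
  exact ⟨ω', fun i hi => hJ i (hsub.subset hi), hred, hπ⟩

theorem IsMinRep.length_lt_mul_simple {u : W} (hu : IsMinRep cs J u) {j : B} (hj : j ∈ J) :
    ℓ u < ℓ (u * s j) :=
  lt_of_le_of_ne (hu _ (simple_mem_parabolicSubgroup cs hj)) (cs.length_mul_simple_ne u j).symm

theorem IsMinRep.length_mul {u w : W} (hu : IsMinRep cs J u) (hw : w ∈ ParabolicSubgroup cs J) :
    ℓ (u * w) = ℓ u + ℓ w := by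
  obtain ⟨κ, hJ, hκ, rfl⟩ := exists_isReduced_of_mem_parabolicSubgroup hw
  clear hw
  rw [hκ.eq]
  induction κ using List.reverseRecOn with
  | nil => simp
  | append_singleton κ j ih =>
    have hκJ : ∀ i ∈ κ, i ∈ J := fun i hi => hJ i (mem_append_left _ hi)
    have hκred : cs.IsReduced κ := isReduced_of_append_left cs hκ
    have hlen := hκ.eq
    rw [wordProd_append, wordProd_singleton, length_append, length_singleton] at hlen ⊢
    have ih := ih hκJ hκred
    obtain ⟨α, hα, rfl⟩ := cs.exists_isReduced u
    have hακ : cs.IsReduced (α ++ κ) := isReduced_append cs hα hκred (by rw [ih, hκred.eq])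
    rcases cs.length_mul_simple (π α * π κ) j with h | h
    · rw [← mul_assoc, h, ih, add_assoc]
    · have hinv : cs.IsRightInversion (π (α ++ κ)) (s j) :=
        ⟨cs.isReflection_simple j, by rw [wordProd_append]; omega⟩
      rcases exists_eraseIdx_append_of_isRightInversion cs hinv with
        ⟨k, hk, heq⟩ | ⟨k, hk, heq⟩
      · rw [wordProd_append, wordProd_append] at heq
        have hmem : π κ * s j * (π κ)⁻¹ ∈ ParabolicSubgroup cs J :=
          mul_mem (mul_mem (wordProd_mem_parabolicSubgroup cs hκJ)
            (simple_mem_parabolicSubgroup cs (hJ j (by simp))))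
            (inv_mem (wordProd_mem_parabolicSubgroup cs hκJ))
        have := hu _ hmem
        rw [show π α * (π κ * s j * (π κ)⁻¹) = π (α.eraseIdx k) by
          rw [← mul_inv_eq_iff_eq_mul.mpr heq]; group] at this
        have := length_wordProd_eraseIdx_lt cs hk
        rw [hα.eq] at *
        omega
      · rw [wordProd_append, wordProd_append, mul_assoc, mul_right_inj] at heq
        have := length_wordProd_eraseIdx_lt cs hk
        rw [← heq] at this
        omega

theorem IsMinRep.bruhatLE_mul {u w : W} (hu : IsMinRep cs J u)
    (hw : w ∈ ParabolicSubgroup cs J) : BruhatLE cs u (u * w) := by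
  obtain ⟨κ, -, hκ, rfl⟩ := exists_isReduced_of_mem_parabolicSubgroup hw
  obtain ⟨α, hα, rfl⟩ := cs.exists_isReduced u
  have hακ : cs.IsReduced (α ++ κ) := isReduced_append cs hα hκ (hu.length_mul hw)
  simpa [wordProd_append] using bruhatLE_wordProd_of_sublist hακ (sublist_append_left α κ)

variable (cs J) in
theorem exists_isMinRep (y : W) :
    ∃ z, IsMinRep cs J z ∧ z⁻¹ * y ∈ ParabolicSubgroup cs J := by
  obtain ⟨z, hz, hmin⟩ :=
    (measure cs.length).wf.has_min {z | z⁻¹ * y ∈ ParabolicSubgroup cs J} ⟨y, by simp [one_mem]⟩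
  refine ⟨z, fun x hx => not_lt.mp (hmin (z * x) ?_), hz⟩
  simpa [mul_assoc] using mul_mem (inv_mem hx) hz

theorem IsMinRep.exists_descent_mem_coset {u y : W} (hu : IsMinRep cs J u)
    (hy : u⁻¹ * y ∈ ParabolicSubgroup cs J) (hne : y ≠ u) :
    ∃ j ∈ J, ℓ (y * s j) < ℓ y ∧ u⁻¹ * (y * s j) ∈ ParabolicSubgroup cs J := by
  obtain ⟨κ, hJ, hκ, hκπ⟩ := exists_isReduced_of_mem_parabolicSubgroup hy
  rcases List.eq_nil_or_concat κ with rfl | ⟨κ, j, rfl⟩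
  · exact absurd (inv_mul_eq_one.mp (by simpa using hκπ.symm)).symm hne
  simp only [concat_eq_append] at hJ hκ hκπ
  have hκJ := wordProd_mem_parabolicSubgroup cs fun i hi => hJ i (mem_append_left _ hi)
  have hy' : y = u * π (κ ++ [j]) := by rw [hκπ, mul_inv_cancel_left]
  have hys : y * s j = u * π κ := by
    rw [hy', wordProd_append, wordProd_singleton, ← mul_assoc, simple_mul_simple_cancel_right]
  refine ⟨j, hJ j (by simp), ?_, by rwa [hys, inv_mul_cancel_left]⟩
  rw [hys, hy', hu.length_mul hκJ, hu.length_mul (hκπ ▸ hy), hκ.eq,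
    (isReduced_of_append_left cs hκ).eq]
  simp

theorem IsMinRep.bruhatLE_of_bruhatLE_of_mem_coset {a u y : W} (ha : IsMinRep cs J a)
    (hu : IsMinRep cs J u) (hy : u⁻¹ * y ∈ ParabolicSubgroup cs J) (hay : BruhatLE cs a y) :
    BruhatLE cs a u := by
  induction hn : ℓ y using Nat.strong_induction_on generalizing y with
  | _ n ih =>
  by_cases hyu : y = u
  · rwa [← hyu]
  obtain ⟨j, hj, hlt, hy'⟩ := hu.exists_descent_mem_coset hy hyu
  exact ih _ (hn ▸ hlt) hy' (hay.le_mul_simple (ha.length_lt_mul_simple hj) hlt) rfl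

theorem IsMinRep.simple_mul {w : W} (hw : IsMinRep cs J w) {i : B} (hi : ℓ (s i * w) < ℓ w) :
    IsMinRep cs J (s i * w) := by
  intro x hx
  have := hw x hx
  rw [mul_assoc]
  rcases cs.length_simple_mul w i with h | h <;>
    rcases cs.length_simple_mul (w * x) i with h' | h' <;> omega

/-- Deodhar's lemma. -/
theorem IsMinRep.simple_mul_or {w : W} (hw : IsMinRep cs J w) (i : B) :
    IsMinRep cs J (s i * w) ∨ ∃ j ∈ J, s i * w = w * s j := by
  refine or_iff_not_imp_left.mpr fun hmin => ?_
  obtain ⟨z, hz, hzw⟩ := exists_isMinRep cs J (s i * w)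
  obtain ⟨j, hj, hdesc, -⟩ := hz.exists_descent_mem_coset hzw (by rintro rfl; exact hmin hz)
  obtain ⟨β, hβ, rfl⟩ := cs.exists_isReduced w
  have hsβ : s i * π β = π ([i] ++ β) := by rw [wordProd_append, wordProd_singleton]
  rw [hsβ] at hdesc
  rcases exists_eraseIdx_append_of_isRightInversion cs ⟨cs.isReflection_simple j, hdesc⟩ with
    ⟨k, hk, heq⟩ | ⟨k, hk, heq⟩
  · obtain rfl : k = 0 := by simpa using hk
    refine ⟨j, hj, ?_⟩
    simp only [eraseIdx_cons_zero, nil_append] at heq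
    rw [hsβ, ← heq, simple_mul_simple_cancel_right]
  · rw [wordProd_append, wordProd_append, mul_assoc, mul_right_inj] at heq
    have := length_wordProd_eraseIdx_lt cs hk
    have := hw.length_lt_mul_simple hj
    rw [heq, ← hβ.eq] at *
    omega

theorem IsMinRep.simple_mul_of_bruhatLE {u b : W} {i : B} (hu : IsMinRep cs J u)
    (hb : IsMinRep cs J b) (hl : ℓ b = ℓ u) (hui : ℓ (s i * u) < ℓ u)
    (hub : BruhatLE cs u (s i * b)) : IsMinRep cs J (s i * b) := by
  refine (hb.simple_mul_or i).resolve_right fun ⟨j, hj, hbj⟩ => ?_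
  have hub' := hu.bruhatLE_of_bruhatLE_of_mem_coset hb (y := b * s j)
    (by simpa using simple_mem_parabolicSubgroup cs hj) (hbj ▸ hub)
  obtain rfl := hub'.eq_of_length_le hl.le
  have := hu.length_lt_mul_simple hj
  rw [← hbj] at this
  omega

theorem IsMinRep.exists_length_eq_succ {u z : W} (hu : IsMinRep cs J u) (hz : IsMinRep cs J z)
    (h : BruhatLT cs u z) :
    ∃ a, IsMinRep cs J a ∧ BruhatLT cs u a ∧ ℓ a = ℓ u + 1 ∧ BruhatLE cs a z := by
  induction hn : ℓ z using Nat.strong_induction_on generalizing u z with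
  | _ n ih =>
  have huz := h.length_lt
  obtain ⟨i, hi⟩ := cs.exists_leftDescent_of_ne_one (w := z) (by rintro rfl; simp at huz)
  have hi : ℓ (s i * z) < ℓ z := hi
  have hsz := cs.length_simple_mul z i
  have of_le_simple_mul : BruhatLE cs u (s i * z) →
      ∃ a, IsMinRep cs J a ∧ BruhatLT cs u a ∧ ℓ a = ℓ u + 1 ∧ BruhatLE cs a z := by
    intro hle
    by_cases heq : u = s i * z
    · exact ⟨z, hz, h, by rw [heq]; omega, bruhatLE_refl z⟩
    obtain ⟨a, ha, hua, hl, haz⟩ := ih _ (by omega) hu (hz.simple_mul hi) ⟨hle, heq⟩ rfl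
    exact ⟨a, ha, hua, hl,
      haz.trans (bruhatLE_of_isLeftInversion ⟨cs.isReflection_simple i, hi⟩)⟩
  rcases cs.length_simple_mul u i with hui | hui
  · exact of_le_simple_mul (h.1.le_simple_mul (by omega) hi)
  have hsu_asc : ℓ (s i * u) < ℓ (s i * (s i * u)) := by
    rw [simple_mul_simple_cancel_left]; omega
  have hsu_le : BruhatLE cs (s i * u) (s i * z) :=
    ((bruhatLE_of_isLeftInversion ⟨cs.isReflection_simple i, by omega⟩).trans h.1).le_simple_mul
      hsu_asc hi
  obtain ⟨b, hb, hub, hbl, hbz⟩ := ih _ (by omega) (hu.simple_mul (by omega)) (hz.simple_mul hi)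
    ⟨hsu_le, fun he => h.2 (by simpa using congrArg (s i * ·) he)⟩ rfl
  rcases cs.length_simple_mul b i with hbi | hbi
  · have hua : BruhatLE cs u (s i * b) := by
      simpa using hub.1.simple_mul_of_ascents hsu_asc (by omega)
    have hzi : ℓ (s i * z) < ℓ (s i * (s i * z)) := by
      rw [simple_mul_simple_cancel_left]; omega
    exact ⟨s i * b, hu.simple_mul_of_bruhatLE hb (by omega) (by omega) hua,
      ⟨hua, by rintro rfl; omega⟩, by omega,
      by simpa using hbz.simple_mul_of_ascents (by omega) hzi⟩
  · have hub' : BruhatLE cs u b := by simpa using hub.1.simple_mul_le hsu_asc (by omega)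
    obtain rfl := hub'.eq_of_length_le (by omega)
    exact of_le_simple_mul hbz

theorem IsMinRep.exists_mem_atomSet {u z : W} (hu : IsMinRep cs J u) (hz : IsMinRep cs J z)
    (h : BruhatLT cs u z) : ∃ a, a ∈ AtomSet cs J u z := by
  obtain ⟨a, ha, hua, hl, haz⟩ := hu.exists_length_eq_succ hz h
  exact ⟨a, ha, bruhatCovBy_of_length_eq hua hl, haz⟩

end Parabolic

theorem coset_inter_lower_eq_general {B W : Type*} [Group W] {M : CoxeterMatrix B}
    (cs : CoxeterSystem M W) (J : Set B) (u v : W)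
    (hu : IsMinRep cs J u) :
    {y : W | u⁻¹ * y ∈ ParabolicSubgroup cs J ∧ BruhatLE cs 1 y ∧ BruhatLE cs y v} =
    {y : W | y ∈ BruhatInterval cs u v ∧
      ∀ a ∈ AtomSet cs J u v, ¬ BruhatLE cs a y} := by
  ext y
  constructor
  · rintro ⟨hy, -, hyv⟩
    refine ⟨⟨by simpa using hu.bruhatLE_mul hy, hyv⟩, fun a ⟨ha, hua, _⟩ hay => ?_⟩
    have := (ha.bruhatLE_of_bruhatLE_of_mem_coset hu hy hay).length_le
    have := hua.1.length_lt
    omega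
  · rintro ⟨⟨huy, hyv⟩, hatoms⟩
    obtain ⟨z, hz, hzy⟩ := exists_isMinRep cs J y
    obtain rfl : u = z := by
      by_contra hne
      obtain ⟨a, ha, hua, haz⟩ :=
        hu.exists_mem_atomSet hz ⟨hu.bruhatLE_of_bruhatLE_of_mem_coset hz hzy huy, hne⟩
      have hay := haz.trans (by simpa using hz.bruhatLE_mul hzy)
      exact hatoms a ⟨ha, hua, hay.trans hyv⟩ hay
    exact ⟨hzy, one_bruhatLE y, hyv⟩

/-- `u W_J ∩ [e,v] = {y ∈ [u,v] : ¬(a ≤ y) for all a ∈ Aᴶ_{u,v}}`. -/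
theorem coset_inter_lower_eq {B W : Type*} [Group W] {M : CoxeterMatrix B}
    (cs : CoxeterSystem M W) (J : Set B) (u v : W)
    (hu : IsMinRep cs J u) (hv : IsMinRep cs J v) (huv : BruhatLE cs u v) :
    {y : W | u⁻¹ * y ∈ ParabolicSubgroup cs J ∧ BruhatLE cs 1 y ∧ BruhatLE cs y v} =
    {y : W | y ∈ BruhatInterval cs u v ∧
      ∀ a ∈ AtomSet cs J u v, ¬ BruhatLE cs a y} :=
  coset_inter_lower_eq_general cs J u v hu

end KL
end

section
/- Let ℐ be a fully invariant collection of Bruhat intervals. Then for all [u₁,v₁], [u₂,v₂] ∈ ℐ and all poset isomorphisms φ: [u₁,v₁] → [u₂,v₂], one has P_{y,y'} = P_{φ(y),φ(y')} for all y, y' ∈ [u₁,v₁]. -/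
open Polynomial

namespace KL

variable {B W : Type*} [Group W] {M : CoxeterMatrix B}

universe u

variable {B₁ W₁ B₂ W₂ : Type*} [Group W₁] [Group W₂]
  {M₁ : CoxeterMatrix B₁} {M₂ : CoxeterMatrix B₂}

/-- A poset isomorphism between the Bruhat intervals `[u₁,v₁]` and `[u₂,v₂]`. -/
def IsIntervalIso (cs₁ : CoxeterSystem M₁ W₁) (cs₂ : CoxeterSystem M₂ W₂)
    (u₁ v₁ : W₁) (u₂ v₂ : W₂) (φ : W₁ → W₂) : Prop :=
  Set.BijOn φ (BruhatInterval cs₁ u₁ v₁) (BruhatInterval cs₂ u₂ v₂) ∧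
  ∀ y ∈ BruhatInterval cs₁ u₁ v₁, ∀ y' ∈ BruhatInterval cs₁ u₁ v₁,
    (BruhatLE cs₁ y y' ↔ BruhatLE cs₂ (φ y) (φ y'))

/-- A bundled Bruhat interval in a Coxeter group. -/
structure CoxInterval : Type (u + 1) where
  B : Type u
  W : Type u
  [grp : Group W]
  M : CoxeterMatrix B
  cs : CoxeterSystem M W
  u : W
  v : W
  le : BruhatLE cs u v

attribute [instance] CoxInterval.grp

/-- A collection of Bruhat intervals is upper `R`-invariant (relative to an
assignment `R` of the `R`-polynomials of each ambient Coxeter group). -/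
def UpperRInvariant (I : Set CoxInterval.{u})
    (R : ∀ i : CoxInterval.{u}, i.W → i.W → Polynomial ℤ) : Prop :=
  ∀ i₁ ∈ I, ∀ i₂ ∈ I, ∀ φ : i₁.W → i₂.W,
    IsIntervalIso i₁.cs i₂.cs i₁.u i₁.v i₂.u i₂.v φ →
    ∀ y ∈ BruhatInterval i₁.cs i₁.u i₁.v, R i₁ y i₁.v = R i₂ (φ y) i₂.v

/-- A collection of Bruhat intervals is upper `P`-invariant. -/
def UpperPInvariant (I : Set CoxInterval.{u})
    (P : ∀ i : CoxInterval.{u}, i.W → i.W → Polynomial ℤ) : Prop :=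
  ∀ i₁ ∈ I, ∀ i₂ ∈ I, ∀ φ : i₁.W → i₂.W,
    IsIntervalIso i₁.cs i₂.cs i₁.u i₁.v i₂.u i₂.v φ →
    ∀ y ∈ BruhatInterval i₁.cs i₁.u i₁.v, P i₁ y i₁.v = P i₂ (φ y) i₂.v

/-- A collection of Bruhat intervals is fully invariant. -/
def FullyInvariant (I : Set CoxInterval.{u})
    (R : ∀ i : CoxInterval.{u}, i.W → i.W → Polynomial ℤ) : Prop :=
  ∀ i₁ ∈ I, ∀ i₂ ∈ I, ∀ φ : i₁.W → i₂.W,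
    IsIntervalIso i₁.cs i₂.cs i₁.u i₁.v i₂.u i₂.v φ →
    ∀ y ∈ BruhatInterval i₁.cs i₁.u i₁.v, ∀ y' ∈ BruhatInterval i₁.cs i₁.u i₁.v,
      R i₁ y y' = R i₂ (φ y) (φ y')


/-!
The identity `q^{ℓ(y')-ℓ(y)} P_{y,y'}(q⁻¹) - P_{y,y'} = ∑_{y < σ ≤ y'} R_{y,σ} P_{σ,y'}`
expresses the left side through `R`-polynomials of the interval and `P`-polynomials of
strictly shorter subintervals, so by induction on `ℓ(y') - ℓ(y)` both intervals produce
the same left side. The left side determines `P_{y,y'}` even without knowing that `φ`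
preserves lengths: if `Q = q^N p(q⁻¹) - p` with `2 deg p < N`, then `Q` is anti-invariant
under `q^N (·)(q⁻¹)`, and two such exponents `N < N + d` would force `(q^d - 1) Q = 0`.
-/

section Reflect

variable {R : Type*} [Ring R]

theorem _root_.Polynomial.eq_zero_of_reflect_eq_self {p : R[X]} {N : ℕ}
    (hp : 2 * p.natDegree < N) (h : p.reflect N = p) : p = 0 := by
  by_contra hp₀
  have hcoeff : p.coeff (N - p.natDegree) ≠ 0 := by
    nth_rewrite 1 [← h]
    rw [coeff_reflect, revAt_le (by omega), Nat.sub_sub_self (by omega)]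
    exact mt leadingCoeff_eq_zero.mp hp₀
  have := le_natDegree_of_ne_zero hcoeff
  omega

theorem _root_.Polynomial.reflect_add_eq_mul_X_pow {p : R[X]} {N : ℕ} (hp : p.natDegree ≤ N)
    (d : ℕ) : p.reflect (N + d) = p.reflect N * X ^ d := by
  simpa [reflect_one] using reflect_mul p 1 hp (natDegree_one.trans_le d.zero_le)

theorem _root_.Polynomial.eq_of_reflect_sub_self_eq {p q : R[X]} {M N : ℕ}
    (hp : 2 * p.natDegree < M) (hq : 2 * q.natDegree < N)
    (h : p.reflect M - p = q.reflect N - q) : p = q := by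
  wlog hMN : M ≤ N generalizing p q M N
  · exact (this hq hp h.symm (by omega)).symm
  obtain ⟨d, rfl⟩ := Nat.exists_eq_add_of_le hMN
  set Q := p.reflect M - p with hQ
  have hpM : p.natDegree ≤ M := by omega
  have hQ_via_p : Q.reflect (M + d) = -(Q * X ^ d) := by
    have hpp : (p.reflect M).reflect (M + d) = p * X ^ d := by
      rw [reflect_add_eq_mul_X_pow (natDegree_reflect_le.trans (by simp [hpM])),
        reflect_reflect]
    rw [hQ, reflect_sub, hpp, reflect_add_eq_mul_X_pow hpM]
    noncomm_ring
  have hQ_via_q : Q.reflect (M + d) = -Q := by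
    rw [h, reflect_sub, reflect_reflect, neg_sub]
  rcases Nat.eq_zero_or_pos d with rfl | hd
  · rw [add_zero, sub_eq_sub_iff_sub_eq_sub, ← reflect_sub] at h
    refine sub_eq_zero.mp (eq_zero_of_reflect_eq_self ?_ h)
    have := natDegree_sub_le p q
    grind
  · have hQ₀ : Q = 0 := by
      rw [← (monic_X_pow_sub_C (1 : R) hd.ne').mul_left_eq_zero_iff, map_one, mul_sub, mul_one,
        sub_eq_zero, ← neg_inj, ← hQ_via_p, hQ_via_q]
    rw [eq_zero_of_reflect_eq_self hp (sub_eq_zero.mp hQ₀),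
      eq_zero_of_reflect_eq_self hq (sub_eq_zero.mp (h ▸ hQ₀))]

end Reflect

-- The second alternative is the infinite-support case, where `∑ᶠ` is `0` by convention.
open Set Function in
theorem _root_.finsum_mem_sub_eq_or_eq_zero {α G : Type*} [AddCommGroup G] {s : Set α} {a : α}
    {f g : α → G} (ha : a ∈ s) (hfg : EqOn f g (s \ {a})) :
    (∑ᶠ x ∈ s, f x) - f a = (∑ᶠ x ∈ s, g x) - g a ∨
      (∑ᶠ x ∈ s, f x = 0 ∧ ∑ᶠ x ∈ s, g x = 0) := by
  have hsupp : (s \ {a}) ∩ support f = (s \ {a}) ∩ support g := by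
    ext x
    exact and_congr_right fun hx => by rw [mem_support, mem_support, hfg hx]
  by_cases hfin : ((s \ {a}) ∩ support f).Finite
  · have split : ∀ h : α → G, ((s \ {a}) ∩ support h).Finite →
        ∑ᶠ x ∈ s, h x = h a + ∑ᶠ x ∈ s \ {a}, h x := fun h hh => by
      rw [← finsum_mem_insert' h (fun hx => hx.2 rfl) hh, insert_sdiff_singleton,
        insert_eq_of_mem ha]
    left
    rw [split f hfin, split g (hsupp ▸ hfin), finsum_mem_congr rfl hfg]
    abel
  · right
    have hinf : ∀ h : α → G, ((s \ {a}) ∩ support h).Infinite → ∑ᶠ x ∈ s, h x = 0 :=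
      fun h hh => finsum_mem_eq_zero_of_infinite (hh.mono (inter_subset_inter_left _ sdiff_subset))
    exact ⟨hinf f hfin, hinf g (hsupp ▸ hfin)⟩

section Bruhat

variable (cs : CoxeterSystem M W)

theorem length_le_of_bruhatLE {x y : W} (h : BruhatLE cs x y) : cs.length x ≤ cs.length y := by
  induction h with
  | refl => exact le_rfl
  | tail _ hstep ih =>
    obtain ⟨t, -, rfl, hlt⟩ := hstep
    omega

theorem length_lt_of_bruhatLT {x y : W} (h : BruhatLT cs x y) : cs.length x < cs.length y := by
  obtain ⟨hle, hne⟩ := h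
  rcases Relation.ReflTransGen.cases_tail hle with rfl | ⟨z, hxz, t, -, rfl, hlt⟩
  · exact absurd rfl hne
  · exact (length_le_of_bruhatLE cs hxz).trans_lt hlt

variable {cs}

theorem bruhatInterval_subset {u v y y' : W} (hy : y ∈ BruhatInterval cs u v)
    (hy' : y' ∈ BruhatInterval cs u v) : BruhatInterval cs y y' ⊆ BruhatInterval cs u v :=
  fun _ hσ => ⟨hy.1.trans hσ.1, hσ.2.trans hy'.2⟩

end Bruhat

namespace IsIntervalIso

variable {cs₁ : CoxeterSystem M₁ W₁} {cs₂ : CoxeterSystem M₂ W₂} {u₁ v₁ : W₁} {u₂ v₂ : W₂}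
  {φ : W₁ → W₂} {y y' : W₁}

theorem bijOn_bruhatInterval (hφ : IsIntervalIso cs₁ cs₂ u₁ v₁ u₂ v₂ φ)
    (hy : y ∈ BruhatInterval cs₁ u₁ v₁) (hy' : y' ∈ BruhatInterval cs₁ u₁ v₁) :
    Set.BijOn φ (BruhatInterval cs₁ y y') (BruhatInterval cs₂ (φ y) (φ y')) := by
  obtain ⟨hbij, hmono⟩ := hφ
  have hsub := bruhatInterval_subset hy hy'
  refine ⟨fun σ hσ => ⟨(hmono _ hy _ (hsub hσ)).mp hσ.1, (hmono _ (hsub hσ) _ hy').mp hσ.2⟩,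
    hbij.injOn.mono hsub, fun τ hτ => ?_⟩
  obtain ⟨σ, hσ, rfl⟩ :=
    hbij.surjOn (bruhatInterval_subset (hbij.mapsTo hy) (hbij.mapsTo hy') hτ)
  exact ⟨σ, ⟨(hmono _ hy _ hσ).mpr hτ.1, (hmono _ hσ _ hy').mpr hτ.2⟩, rfl⟩

variable {R₁ P₁ : W₁ → W₁ → ℤ[X]} {R₂ P₂ : W₂ → W₂ → ℤ[X]}

theorem klPoly_eq_of_lt (hφ : IsIntervalIso cs₁ cs₂ u₁ v₁ u₂ v₂ φ)
    (hR₁ : ∀ x, R₁ x x = 1) (hR₂ : ∀ x, R₂ x x = 1)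
    (hP₁ : IsPFamily cs₁ R₁ P₁) (hP₂ : IsPFamily cs₂ R₂ P₂)
    (hRφ : ∀ y ∈ BruhatInterval cs₁ u₁ v₁, ∀ y' ∈ BruhatInterval cs₁ u₁ v₁,
      R₁ y y' = R₂ (φ y) (φ y'))
    (hy : y ∈ BruhatInterval cs₁ u₁ v₁) (hy' : y' ∈ BruhatInterval cs₁ u₁ v₁)
    (hlt : BruhatLT cs₁ y y')
    (ih : ∀ σ ∈ BruhatInterval cs₁ y y', σ ≠ y → P₁ σ y' = P₂ (φ σ) (φ y')) :
    P₁ y y' = P₂ (φ y) (φ y') := by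
  have hlt₂ : BruhatLT cs₂ (φ y) (φ y') :=
    ⟨(hφ.2 _ hy _ hy').mp hlt.1, fun h => hlt.2 (hφ.1.injOn hy hy' h)⟩
  have htransport : ∑ᶠ σ ∈ BruhatInterval cs₁ y y', R₂ (φ y) (φ σ) * P₂ (φ σ) (φ y') =
      ∑ᶠ τ ∈ BruhatInterval cs₂ (φ y) (φ y'), R₂ (φ y) τ * P₂ τ (φ y') :=
    finsum_mem_eq_of_bijOn φ (hφ.bijOn_bruhatInterval hy hy') fun _ _ => rfl
  have hagree : Set.EqOn (fun σ => R₁ y σ * P₁ σ y') (fun σ => R₂ (φ y) (φ σ) * P₂ (φ σ) (φ y'))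
      (BruhatInterval cs₁ y y' \ {y}) := fun σ ⟨hσ, hne⟩ => by
    simp only [hRφ y hy σ (bruhatInterval_subset hy hy' hσ), ih σ hσ hne]
  have hy_mem : y ∈ BruhatInterval cs₁ y y' := ⟨Relation.ReflTransGen.refl, hlt.1⟩
  have hrec₁ := hP₁.2.2.2 _ _ hlt.1
  have hrec₂ := hP₂.2.2.2 _ _ hlt₂.1
  rcases finsum_mem_sub_eq_or_eq_zero hy_mem hagree with h | ⟨h₁, h₂⟩
  · refine eq_of_reflect_sub_self_eq (hP₁.2.2.1 _ _ hlt) (hP₂.2.2.1 _ _ hlt₂) ?_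
    rw [hrec₁, hrec₂, ← htransport]
    simpa only [hR₁, hR₂, one_mul] using h
  · rw [h₁, reflect_eq_zero_iff] at hrec₁
    rw [htransport, ← hrec₂, reflect_eq_zero_iff] at h₂
    rw [hrec₁, h₂]

theorem klPoly_eq (hφ : IsIntervalIso cs₁ cs₂ u₁ v₁ u₂ v₂ φ)
    (hR₁ : ∀ x, R₁ x x = 1) (hR₂ : ∀ x, R₂ x x = 1)
    (hP₁ : IsPFamily cs₁ R₁ P₁) (hP₂ : IsPFamily cs₂ R₂ P₂)
    (hRφ : ∀ y ∈ BruhatInterval cs₁ u₁ v₁, ∀ y' ∈ BruhatInterval cs₁ u₁ v₁,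
      R₁ y y' = R₂ (φ y) (φ y')) :
    ∀ y ∈ BruhatInterval cs₁ u₁ v₁, ∀ y' ∈ BruhatInterval cs₁ u₁ v₁,
      P₁ y y' = P₂ (φ y) (φ y') := by
  intro y hy y' hy'
  induction hn : cs₁.length y' - cs₁.length y using Nat.strong_induction_on generalizing y with
  | _ n ih =>
  by_cases hle : BruhatLE cs₁ y y'
  · by_cases heq : y = y'
    · rw [heq, hP₁.2.1, hP₂.2.1]
    refine hφ.klPoly_eq_of_lt hR₁ hR₂ hP₁ hP₂ hRφ hy hy' ⟨hle, heq⟩ fun σ hσ hne => ?_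
    have hyσ := length_lt_of_bruhatLT cs₁ ⟨hσ.1, Ne.symm hne⟩
    have hσy' := length_le_of_bruhatLE cs₁ hσ.2
    exact ih _ (by omega) σ (bruhatInterval_subset hy hy' hσ) rfl
  · have hle₂ : ¬ BruhatLE cs₂ (φ y) (φ y') := fun h => hle ((hφ.2 _ hy _ hy').mpr h)
    rw [hP₁.1 _ _ hle, hP₂.1 _ _ hle₂]

end IsIntervalIso

/-- a fully invariant collection of Bruhat intervals has
invariant Kazhdan–Lusztig polynomials `P_{y,y'}`. -/
theorem fullyInvariant_P {I : Set CoxInterval.{u}}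
    (R P : ∀ i : CoxInterval.{u}, i.W → i.W → Polynomial ℤ)
    (hR : ∀ i : CoxInterval.{u}, IsRFamily i.cs (R i))
    (hP : ∀ i : CoxInterval.{u}, IsPFamily i.cs (R i) (P i))
    (hInv : FullyInvariant I R) :
    ∀ i₁ ∈ I, ∀ i₂ ∈ I, ∀ φ : i₁.W → i₂.W,
      IsIntervalIso i₁.cs i₂.cs i₁.u i₁.v i₂.u i₂.v φ →
      ∀ y ∈ BruhatInterval i₁.cs i₁.u i₁.v,
        ∀ y' ∈ BruhatInterval i₁.cs i₁.u i₁.v,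
          P i₁ y y' = P i₂ (φ y) (φ y') := by
  intro i₁ h₁ i₂ h₂ φ hφ
  exact hφ.klPoly_eq (hR i₁).2.1 (hR i₂).2.1 (hP i₁) (hP i₂) (hInv i₁ h₁ i₂ h₂ φ hφ)

end KL
end

section
/- If upper subintervals are taken of a coelementary interval, they remain coelementary: for a coelementary Bruhat interval [u,v] in a symmetric group and any y ∈ [u,v], the interval [y,v] is coelementary. -/
namespace KL

/-- The number of inversions of a permutation, i.e. its Coxeter length in the
symmetric group. -/
def permLength {n : ℕ} (σ : Equiv.Perm (Fin n)) : ℕ :=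
  (Finset.univ.filter fun p : Fin n × Fin n => p.1 < p.2 ∧ σ p.2 < σ p.1).card

/-- Bruhat order on the symmetric group: reflexive-transitive closure of right
multiplication by a transposition that increases length. -/
def PermBruhatLE {n : ℕ} : Equiv.Perm (Fin n) → Equiv.Perm (Fin n) → Prop :=
  Relation.ReflTransGen fun x y => ∃ i j : Fin n, i ≠ j ∧
    y = x * Equiv.swap i j ∧ permLength x < permLength y

def PermBruhatLT {n : ℕ} (x y : Equiv.Perm (Fin n)) : Prop :=
  PermBruhatLE x y ∧ x ≠ y

/-- Covering relation of Bruhat order on the symmetric group. -/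
def PermBruhatCovBy {n : ℕ} (x y : Equiv.Perm (Fin n)) : Prop :=
  PermBruhatLT x y ∧ ∀ z, PermBruhatLT x z → PermBruhatLT z y → False

/-- The Bruhat interval `[u,v]` in a symmetric group. -/
def PermInterval {n : ℕ} (u v : Equiv.Perm (Fin n)) : Set (Equiv.Perm (Fin n)) :=
  {y | PermBruhatLE u y ∧ PermBruhatLE y v}

/-- The interval `[u,v] ⊆ Sₙ` is cosimple if the set
`{eᵢ - eⱼ : i < j, u ≤ v·(i j) ⋖ v}` is linearly independent in `ℝⁿ`. -/
def Cosimple {n : ℕ} (u v : Equiv.Perm (Fin n)) : Prop :=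
  PermBruhatLE u v ∧
  LinearIndependent ℝ ((↑) :
    {w : Fin n → ℝ | ∃ i j : Fin n, i < j ∧
      PermBruhatLE u (v * Equiv.swap i j) ∧
      PermBruhatCovBy (v * Equiv.swap i j) v ∧
      w = Pi.single i (1 : ℝ) - Pi.single j (1 : ℝ)} → (Fin n → ℝ))

/-- A poset isomorphism between Bruhat intervals of symmetric groups. -/
def IsPermIntervalIso {m n : ℕ} (u₁ v₁ : Equiv.Perm (Fin m))
    (u₂ v₂ : Equiv.Perm (Fin n)) (φ : Equiv.Perm (Fin m) → Equiv.Perm (Fin n)) :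
    Prop :=
  Set.BijOn φ (PermInterval u₁ v₁) (PermInterval u₂ v₂) ∧
  ∀ y ∈ PermInterval u₁ v₁, ∀ y' ∈ PermInterval u₁ v₁,
    (PermBruhatLE y y' ↔ PermBruhatLE (φ y) (φ y'))

/-- An interval is coelementary if it is isomorphic as a poset to some
cosimple interval in some symmetric group. -/
def Coelementary {n : ℕ} (u v : Equiv.Perm (Fin n)) : Prop :=
  ∃ (m : ℕ) (u' v' : Equiv.Perm (Fin m))
    (φ : Equiv.Perm (Fin n) → Equiv.Perm (Fin m)),
    Cosimple u' v' ∧ IsPermIntervalIso u v u' v' φ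

/-! An isomorphism `φ : [u, v] ≅ [u', v']` sends the top `v` to `v'`, so it restricts to an
isomorphism `[y, v] ≅ [φ y, v']`. The vectors defining cosimplicity of `[φ y, v']` are a
subfamily of those for `[u', v']`, since `u' ≤ φ y`, hence still linearly independent. -/

lemma PermBruhatLE.eq_or_permLength_lt {n : ℕ} {x y : Equiv.Perm (Fin n)}
    (h : PermBruhatLE x y) : x = y ∨ permLength x < permLength y := by
  induction h with
  | refl => exact Or.inl rfl
  | tail _ step ih =>
    obtain ⟨_, _, _, _, hlt⟩ := step
    rcases ih with rfl | ih
    · exact Or.inr hlt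
    · exact Or.inr (ih.trans hlt)

lemma PermBruhatLE.antisymm {n : ℕ} {x y : Equiv.Perm (Fin n)}
    (hxy : PermBruhatLE x y) (hyx : PermBruhatLE y x) : x = y := by
  rcases hxy.eq_or_permLength_lt with rfl | h₁
  · rfl
  rcases hyx.eq_or_permLength_lt with rfl | h₂
  · rfl
  exact absurd (h₁.trans h₂) (lt_irrefl _)

lemma permInterval_subset_of_le {n : ℕ} {u y v : Equiv.Perm (Fin n)}
    (huy : PermBruhatLE u y) : PermInterval y v ⊆ PermInterval u v :=
  fun _ hz => ⟨huy.trans hz.1, hz.2⟩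

lemma Cosimple.of_le {n : ℕ} {u y v : Equiv.Perm (Fin n)} (h : Cosimple u v)
    (huy : PermBruhatLE u y) (hyv : PermBruhatLE y v) : Cosimple y v := by
  refine ⟨hyv, LinearIndepOn.mono (v := id) h.2 ?_⟩
  rintro w ⟨i, j, hij, hle, hcov, rfl⟩
  exact ⟨i, j, hij, huy.trans hle, hcov, rfl⟩

namespace IsPermIntervalIso

variable {m n : ℕ} {u v : Equiv.Perm (Fin m)} {u' v' : Equiv.Perm (Fin n)}
  {φ : Equiv.Perm (Fin m) → Equiv.Perm (Fin n)}

lemma map_top (hφ : IsPermIntervalIso u v u' v' φ) (huv : PermBruhatLE u v) : φ v = v' := by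
  have hv : v ∈ PermInterval u v := ⟨huv, .refl⟩
  have hφu : φ u ∈ PermInterval u' v' := hφ.1.mapsTo ⟨.refl, huv⟩
  obtain ⟨w, hw, hφw⟩ := hφ.1.surjOn ⟨hφu.1.trans hφu.2, .refl⟩
  have hv'_le : PermBruhatLE v' (φ v) := hφw ▸ (hφ.2 w hw v hv).mp hw.2
  exact (hφ.1.mapsTo hv).2.antisymm hv'_le

lemma restrict_upper (hφ : IsPermIntervalIso u v u' v' φ) {y : Equiv.Perm (Fin m)}
    (hy : y ∈ PermInterval u v) : IsPermIntervalIso y v (φ y) v' φ := by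
  have hsub := permInterval_subset_of_le (v := v) hy.1
  have hφv := hφ.map_top (hy.1.trans hy.2)
  have hv : v ∈ PermInterval u v := ⟨hy.1.trans hy.2, .refl⟩
  refine ⟨⟨fun z hz => ⟨?_, ?_⟩, hφ.1.injOn.mono hsub, fun z' hz' => ?_⟩,
    fun a ha b hb => hφ.2 a (hsub ha) b (hsub hb)⟩
  · exact (hφ.2 y hy z (hsub hz)).mp hz.1
  · exact hφv ▸ (hφ.2 z (hsub hz) v hv).mp hz.2
  · obtain ⟨z, hz, rfl⟩ :=
      hφ.1.surjOn (permInterval_subset_of_le (hφ.1.mapsTo hy).1 hz')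
    exact ⟨z, ⟨(hφ.2 y hy z hz).mpr hz'.1, hz.2⟩, rfl⟩

end IsPermIntervalIso

/-- upper subintervals of a coelementary interval in a symmetric
group are coelementary. -/
theorem coelementary_upper {n : ℕ} (u v : Equiv.Perm (Fin n))
    (h : Coelementary u v) (y : Equiv.Perm (Fin n)) (hy : y ∈ PermInterval u v) :
    Coelementary y v := by
  obtain ⟨m, u', v', φ, hcos, hφ⟩ := h
  have hφy : φ y ∈ PermInterval u' v' := hφ.1.mapsTo hy
  exact ⟨m, φ y, v', φ, hcos.of_le hφy.1 hφy.2, hφ.restrict_upper hy⟩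

end KL
end
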